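/- Let 𝒜 be a relational structure over τ with universe A, let X ∈ A be domain restricted in 𝒜 (with domain constraint symbol dom(X)), let 𝒜_V be a view structure for 𝒜, let ℬ be a structure over τ, and let ℬ_V be legal with respect to 𝒜_V and (𝒜,ℬ). Put ℬ'_V = GAC(𝒜_V,ℬ_V) and let a be any element with (a) ∈ dom(X)^{ℬ'_V}, where dom(X) also denotes the base view of the domain constraint of X. Let ℬ₁ be the structure obtained from ℬ by replacing dom(X)^ℬ with {(a)} (all other relations unchanged), and let ℬ''_V be obtained from ℬ'_V by replacing dom(X)^{ℬ'_V} with {(a)}. Then ℬ''_V is legal with respect to 𝒜_V and (𝒜,ℬ₁). -/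

import Mathlib

/-!
Homomorphisms into `ℬ` restrict to pairwise consistent sub-structures of a legal `ℬ_V`
(one assignment per view), so GAC keeps them and `GAC(𝒜_V,ℬ_V)` is again legal. Fixing
`X` to `a` in both structures then preserves legality: a homomorphism into `ℬ₁` is one
into `ℬ` that sends `X` to `a`, the only variable of the base view of `dom(X)`; and since
`dom(X)` has the single constraint `(X)`, the new base view `{(a)}` only has to fit
`dom(X)^{ℬ₁} = {(a)}`, while `(a)` was already in the old one.
-/

open Set

/-- A relational structure over vocabulary `σ` (with arities `ar`) and universe `A`. -/
structure RelStruct (σ : Type) (ar : σ → ℕ) (A : Type) where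
  rel : ∀ R : σ, Set (Fin (ar R) → A)

variable {σ : Type} {ar : σ → ℕ} {A B : Type}

/-- `h` is a homomorphism from `𝒜` to `ℬ`. -/
def IsHom (𝒜 : RelStruct σ ar A) (ℬ : RelStruct σ ar B) (h : A → B) : Prop :=
  ∀ R : σ, ∀ t ∈ 𝒜.rel R, (fun i => h (t i)) ∈ ℬ.rel R

/-- `𝒜^ℬ[X]`: the set of restrictions to `X` of homomorphisms from `𝒜` to `ℬ`. -/
def homRestrict (𝒜 : RelStruct σ ar A) (ℬ : RelStruct σ ar B) (X : Set A) :
    Set (↥X → B) :=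
  { g | ∃ h : A → B, IsHom 𝒜 ℬ h ∧ g = X.restrict h }

/-- `𝒜'` is a (relation-wise) substructure of `𝒜`. -/
def SubStructOf (𝒜' 𝒜 : RelStruct σ ar A) : Prop :=
  ∀ R : σ, 𝒜'.rel R ⊆ 𝒜.rel R

/-- `𝒜'` is a core of `𝒜`. -/
def IsCoreOf (𝒜' 𝒜 : RelStruct σ ar A) : Prop :=
  SubStructOf 𝒜' 𝒜 ∧ (∃ h : A → A, IsHom 𝒜 𝒜' h) ∧
    ∀ 𝒜'' : RelStruct σ ar A, SubStructOf 𝒜'' 𝒜' → 𝒜'' ≠ 𝒜' →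
      ¬ ∃ h : A → A, IsHom 𝒜 𝒜'' h

/-- `X` is domain restricted in `𝒜`, with (unary) domain-constraint symbol `dR`. -/
def DomRestricted (𝒜 : RelStruct σ ar A) (dR : σ) (X : A) : Prop :=
  ar dR = 1 ∧ 𝒜.rel dR = {fun _ => X}

/-- A view structure (v-structure) for `𝒜`, over the vocabulary `ν` of views:
each view `v` has a set of variables (the entries of its single defining tuple),
and every constraint of `𝒜` has a base view. -/
structure ViewStruct (σ : Type) (ar : σ → ℕ) (A : Type) (𝒜 : RelStruct σ ar A)
    (ν : Type) where
  vars : ν → Set A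
  base : ∀ R : σ, ∀ t : Fin (ar R) → A, t ∈ 𝒜.rel R → ν
  base_vars : ∀ R t ht, vars (base R t ht) = Set.range t

variable {ν : Type} {𝒜 : RelStruct σ ar A}

/-- Restriction of an assignment on `W` to a subset `S ⊆ W`. -/
def restr {W S : Set A} (hSW : S ⊆ W) (g : ↥W → B) : ↥S → B :=
  fun x => g ⟨x.1, hSW x.2⟩

/-- `BV` (a τ_V-structure, given as a set of assignments for each view) is legal
w.r.t. `V` and the instance `(𝒜,ℬ)`. -/
def Legal (𝒜 : RelStruct σ ar A) (ℬ : RelStruct σ ar B)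
    (V : ViewStruct σ ar A 𝒜 ν) (BV : ∀ v : ν, Set (↥(V.vars v) → B)) : Prop :=
  (∀ v : ν, homRestrict 𝒜 ℬ (V.vars v) ⊆ BV v) ∧
  (∀ (R : σ) (t : Fin (ar R) → A) (ht : t ∈ 𝒜.rel R),
     ∀ g ∈ BV (V.base R t ht),
       (fun i => g ⟨t i, by rw [V.base_vars]; exact Set.mem_range_self i⟩) ∈ ℬ.rel R)

/-- Pairwise consistency of a family of view relations w.r.t. `V`. -/
def PWConsistent (V : ViewStruct σ ar A 𝒜 ν)
    (BV' : ∀ v : ν, Set (↥(V.vars v) → B)) : Prop :=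
  ∀ v1 v2 : ν, (V.vars v1 ∩ V.vars v2).Nonempty →
    restr Set.inter_subset_left '' BV' v1 = restr Set.inter_subset_right '' BV' v2

/-- `GAC V BV`: the largest pairwise consistent sub-structure of `BV`
(defined as the union of all pairwise consistent sub-structures). -/
def GAC (V : ViewStruct σ ar A 𝒜 ν) (BV : ∀ v : ν, Set (↥(V.vars v) → B)) :
    ∀ v : ν, Set (↥(V.vars v) → B) :=
  fun v => { g | ∃ BV' : ∀ w : ν, Set (↥(V.vars w) → B),
    (∀ w, BV' w ⊆ BV w) ∧ PWConsistent V BV' ∧ g ∈ BV' v }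

/-- `h` is a homomorphism from the v-structure `𝒜_V` to `ℬ_V` (reading the single
tuple of each view as an assignment). -/
def IsViewHom (V : ViewStruct σ ar A 𝒜 ν) (BV : ∀ v : ν, Set (↥(V.vars v) → B))
    (h : A → B) : Prop :=
  ∀ v : ν, (V.vars v).restrict h ∈ BV v

/-- The hyperedges of the hypergraph `ℋ_𝒜` of a structure `𝒜`. -/
def structEdges (𝒜 : RelStruct σ ar A) : Set (Set A) :=
  { e | ∃ (R : σ) (t : Fin (ar R) → A), t ∈ 𝒜.rel R ∧ e = Set.range t }

/-- The hyperedges of the hypergraph `ℋ_{𝒜_V}` of a v-structure. -/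
def viewEdges (V : ViewStruct σ ar A 𝒜 ν) : Set (Set A) := Set.range V.vars

/-- `H1 ≤ H2`: every hyperedge of `H1` is contained in some hyperedge of `H2`. -/
def HypLE (H1 H2 : Set (Set A)) : Prop := ∀ e ∈ H1, ∃ e' ∈ H2, e ⊆ e'

/-- `T` is a join tree of the hypergraph with hyperedges `H`. -/
def IsJoinTree (H : Set (Set A)) (T : SimpleGraph ↥H) : Prop :=
  T.IsTree ∧ ∀ (X : A) (e1 e2 : ↥H), X ∈ (e1 : Set A) → X ∈ (e2 : Set A) →
    ∀ p : T.Walk e1 e2, p.IsPath → ∀ e ∈ p.support, X ∈ (e : Set A)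

/-- A hypergraph is acyclic iff it has a join tree. -/
def AcyclicHyp (H : Set (Set A)) : Prop := ∃ T : SimpleGraph ↥H, IsJoinTree H T

/-- `(H1, H2)` has a tree projection. -/
def HasTreeProjection (H1 H2 : Set (Set A)) : Prop :=
  ∃ Ha : Set (Set A), AcyclicHyp Ha ∧ HypLE H1 Ha ∧ HypLE Ha H2

/-- `𝒜 ⊎ 𝕊_O`, where the single tuple `t` (of length `r`) enumerates `O`. -/
def addRel (𝒜 : RelStruct σ ar A) (r : ℕ) (t : Fin r → A) :
    RelStruct (σ ⊕ Unit) (Sum.elim ar fun _ => r) A where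
  rel := fun R => match R with
    | Sum.inl R => 𝒜.rel R
    | Sum.inr _ => {t}

/-- `𝒜 ⊎ ⨄_{X ∈ O} 𝕊_{{X}}`. -/
def addSingles (𝒜 : RelStruct σ ar A) (O : Set A) :
    RelStruct (σ ⊕ ↥O) (Sum.elim ar fun _ => 1) A where
  rel := fun R => match R with
    | Sum.inl R => 𝒜.rel R
    | Sum.inr X => {fun _ => (X : A)}

/-- `O` is tp-covered in the v-structure `V`. -/
def TpCovered (V : ViewStruct σ ar A 𝒜 ν) (O : Set A) : Prop :=
  ∃ (r : ℕ) (t : Fin r → A), Function.Injective t ∧ Set.range t = O ∧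
    ∃ 𝒜' : RelStruct (σ ⊕ Unit) (Sum.elim ar fun _ => r) A,
      IsCoreOf 𝒜' (addRel 𝒜 r t) ∧
      HasTreeProjection (structEdges 𝒜') (viewEdges V)

/-- The assignments on `W` that satisfy all constraints of `𝒜` whose variables
all lie in `W` (interpreted in `ℬ`). -/
def solsOn (𝒜 : RelStruct σ ar A) (ℬ : RelStruct σ ar B) (W : Set A) :
    Set (↥W → B) :=
  { g | ∀ (R : σ) (t : Fin (ar R) → A), t ∈ 𝒜.rel R →
      ∀ hsub : ∀ i, t i ∈ W, (fun i => g ⟨t i, hsub i⟩) ∈ ℬ.rel R }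

/-- The constraints of `𝒜`. -/
def Cst (𝒜 : RelStruct σ ar A) : Type := Σ R : σ, {t : Fin (ar R) → A // t ∈ 𝒜.rel R}

/-- The variables of a constraint. -/
def cstVars (c : Cst 𝒜) : Set A := Set.range c.2.1

/-- Index type for the views of `ℓ-tw_k`: the nonempty sets of at most `k` variables. -/
def twIdx (A : Type) (k : ℕ) : Type := {W : Set A // W.Nonempty ∧ W.Finite ∧ W.ncard ≤ k}

/-- The v-structure `ℓ-tw_k(𝒜)`. -/
def twViews (𝒜 : RelStruct σ ar A) (k : ℕ) :
    ViewStruct σ ar A 𝒜 (twIdx A k ⊕ Cst 𝒜) where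
  vars := Sum.elim (fun W => W.1) cstVars
  base := fun R t ht => Sum.inr ⟨R, ⟨t, ht⟩⟩
  base_vars := fun _ _ _ => rfl

/-- The legal structure `r-tw_k(𝒜,ℬ)`. -/
def rtw (𝒜 : RelStruct σ ar A) (ℬ : RelStruct σ ar B) (k : ℕ) :
    ∀ v : twIdx A k ⊕ Cst 𝒜, Set (↥((twViews 𝒜 k).vars v) → B) :=
  fun v => solsOn 𝒜 ℬ ((twViews 𝒜 k).vars v)

/-- Index type for the views of `ℓ-hw_k`: nonempty sets of at most `k` constraints. -/
def hwIdx (𝒜 : RelStruct σ ar A) (k : ℕ) : Type :=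
  {C : Finset (Cst 𝒜) // C.Nonempty ∧ C.card ≤ k}

/-- The variables occurring in a set of constraints. -/
def hwVars (C : Finset (Cst 𝒜)) : Set A := ⋃ c ∈ C, cstVars c

/-- The v-structure `ℓ-hw_k(𝒜)` (for `k ≥ 1`). -/
def hwViews (𝒜 : RelStruct σ ar A) (k : ℕ) (hk : 1 ≤ k) :
    ViewStruct σ ar A 𝒜 (hwIdx 𝒜 k) where
  vars := fun C => hwVars C.1
  base := fun R t ht => ⟨{⟨R, ⟨t, ht⟩⟩}, Finset.singleton_nonempty _, le_trans (le_of_eq (Finset.card_singleton _)) hk⟩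
  base_vars := fun R t ht => by
    ext x; simp only [hwVars, cstVars, Set.mem_iUnion]
    constructor
    · rintro ⟨c, hc, hx⟩; have hc' := Finset.mem_singleton.mp hc; subst hc'; exact hx
    · intro hx; exact ⟨⟨R, ⟨t, ht⟩⟩, Finset.mem_singleton_self _, hx⟩

/-- The legal structure `r-hw_k(𝒜,ℬ)`: each view holds the solutions of its subproblem. -/
def rhw (𝒜 : RelStruct σ ar A) (ℬ : RelStruct σ ar B) (k : ℕ) (hk : 1 ≤ k) :
    ∀ C : hwIdx 𝒜 k, Set (↥((hwViews 𝒜 k hk).vars C) → B) :=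
  fun C => { g | ∀ (c : Cst 𝒜) (hc : c ∈ C.1),
    (fun i => g ⟨c.2.1 i, Set.mem_iUnion₂.mpr ⟨c, hc, Set.mem_range_self i⟩⟩) ∈ ℬ.rel c.1 }

/-- Replace the relation of symbol `dR` in `ℬ` by `s`. -/
noncomputable def replaceRel (ℬ : RelStruct σ ar B) (dR : σ)
    (s : Set (Fin (ar dR) → B)) : RelStruct σ ar B :=
  letI := Classical.decEq σ
  ⟨Function.update ℬ.rel dR s⟩

/-- Replace the relation of view `v0` by `s`. -/
noncomputable def updateView (V : ViewStruct σ ar A 𝒜 ν)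
    (BV : ∀ v : ν, Set (↥(V.vars v) → B)) (v0 : ν) (s : Set (↥(V.vars v0) → B)) :
    ∀ v : ν, Set (↥(V.vars v) → B) :=
  letI := Classical.decEq ν
  Function.update BV v0 s

/-- The Gaifman graph of a structure. -/
def gaifman (𝒜 : RelStruct σ ar A) : SimpleGraph A where
  Adj u v := u ≠ v ∧ ∃ (R : σ) (t : Fin (ar R) → A),
      t ∈ 𝒜.rel R ∧ u ∈ Set.range t ∧ v ∈ Set.range t
  symm := ⟨fun u v h => ⟨h.1.symm, by obtain ⟨-, R, t, ht, hu, hv⟩ := h; exact ⟨R, t, ht, hv, hu⟩⟩⟩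
  loopless := ⟨fun u h => h.1 rfl⟩

/-- The `m × n` grid graph. -/
def gridGraph (m n : ℕ) : SimpleGraph (Fin m × Fin n) where
  Adj u v := Nat.dist u.1.1 v.1.1 + Nat.dist u.2.1 v.2.1 = 1
  symm := ⟨by intro u v h; simpa [Nat.dist_comm] using h⟩
  loopless := ⟨by intro u h; simp [Nat.dist_self] at h⟩

/-- Two nodes share a hyperedge of `H`. -/
def sharesEdge (H : Set (Set A)) (u w : A) : Prop := ∃ e ∈ H, u ∈ e ∧ w ∈ e

/-- The hypergraph with hyperedges `H` is connected (over the whole universe). -/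
def HypConnected (H : Set (Set A)) : Prop :=
  ∀ x y : A, Relation.ReflTransGen (sharesEdge H) x y

section replace

variable {ℬ : RelStruct σ ar B} {dR : σ} {s : Set (Fin (ar dR) → B)}

theorem replaceRel_rel_self : (replaceRel ℬ dR s).rel dR = s := by
  simp [replaceRel]

theorem replaceRel_rel_of_ne {R : σ} (hR : R ≠ dR) : (replaceRel ℬ dR s).rel R = ℬ.rel R := by
  classical exact Function.update_of_ne hR _ _

theorem replaceRel_subStructOf (hs : s ⊆ ℬ.rel dR) : SubStructOf (replaceRel ℬ dR s) ℬ := by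
  intro R
  by_cases hR : R = dR
  · subst hR
    rw [replaceRel_rel_self]
    exact hs
  · rw [replaceRel_rel_of_ne hR]

end replace

section update

variable {V : ViewStruct σ ar A 𝒜 ν} {BV : ∀ v : ν, Set (↥(V.vars v) → B)} {v0 : ν}
  {s : Set (↥(V.vars v0) → B)}

theorem updateView_self : updateView V BV v0 s v0 = s := by
  simp [updateView]

theorem updateView_of_ne {v : ν} (hv : v ≠ v0) : updateView V BV v0 s v = BV v := by
  classical exact Function.update_of_ne hv _ _

theorem updateView_subset (hs : s ⊆ BV v0) (v : ν) : updateView V BV v0 s v ⊆ BV v := by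
  by_cases hv : v = v0
  · subst hv
    rw [updateView_self]
    exact hs
  · rw [updateView_of_ne hv]

end update

theorem IsHom.mono {ℬ₁ ℬ : RelStruct σ ar B} {h : A → B} (hh : IsHom 𝒜 ℬ₁ h)
    (hsub : SubStructOf ℬ₁ ℬ) : IsHom 𝒜 ℬ h :=
  fun R t ht => hsub R (hh R t ht)

theorem IsHom.apply_eq_of_replaceRel_singleton {ℬ : RelStruct σ ar B} {dR : σ}
    {c : Fin (ar dR) → B} {h : A → B} (hh : IsHom 𝒜 (replaceRel ℬ dR {c}) h)
    {t : Fin (ar dR) → A} (ht : t ∈ 𝒜.rel dR) (i : Fin (ar dR)) : h (t i) = c i := by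
  have hmem := hh dR t ht
  rw [replaceRel_rel_self, Set.mem_singleton_iff] at hmem
  exact congrFun hmem i

theorem ViewStruct.eq_of_mem_vars_base_const (V : ViewStruct σ ar A 𝒜 ν) {R : σ} {X : A}
    {ht : (fun _ => X : Fin (ar R) → A) ∈ 𝒜.rel R} {x : A}
    (hx : x ∈ V.vars (V.base R (fun _ => X) ht)) : x = X := by
  rw [V.base_vars] at hx
  obtain ⟨-, rfl⟩ := hx
  rfl

section GAC

variable {V : ViewStruct σ ar A 𝒜 ν} {BV : ∀ v : ν, Set (↥(V.vars v) → B)}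

theorem gac_subset (v : ν) : GAC V BV v ⊆ BV v := by
  rintro g ⟨BV', hsub, -, hg⟩
  exact hsub v hg

theorem homRestrict_subset_gac {ℬ : RelStruct σ ar B}
    (hBV : ∀ v : ν, homRestrict 𝒜 ℬ (V.vars v) ⊆ BV v) (v : ν) :
    homRestrict 𝒜 ℬ (V.vars v) ⊆ GAC V BV v := by
  rintro g ⟨h, hh, rfl⟩
  refine ⟨fun w => {(V.vars w).domRestrict h}, ?_, ?_, rfl⟩
  · rintro w g rfl
    exact hBV w ⟨h, hh, rfl⟩
  · intro v1 v2 _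
    simp only [Set.image_singleton]
    rfl

theorem Legal.gac {ℬ : RelStruct σ ar B} (hleg : Legal 𝒜 ℬ V BV) : Legal 𝒜 ℬ V (GAC V BV) :=
  ⟨homRestrict_subset_gac hleg.1, fun R t ht g hg => hleg.2 R t ht g (gac_subset _ hg)⟩

end GAC

theorem Legal.replaceRel_updateView_base_dom {ℬ : RelStruct σ ar B} {V : ViewStruct σ ar A 𝒜 ν}
    {BV : ∀ v : ν, Set (↥(V.vars v) → B)} (hleg : Legal 𝒜 ℬ V BV) {dR : σ} {X : A}
    (hdom : DomRestricted 𝒜 dR X) (htX : (fun _ => X : Fin (ar dR) → A) ∈ 𝒜.rel dR) {a : B}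
    (ha : (fun _ => a) ∈ BV (V.base dR (fun _ => X) htX)) :
    Legal 𝒜 (replaceRel ℬ dR {fun _ => a}) V
      (updateView V BV (V.base dR (fun _ => X) htX) {fun _ => a}) := by
  set v0 := V.base dR (fun _ => X) htX
  have haB : (fun _ => a) ∈ ℬ.rel dR := hleg.2 dR _ htX _ ha
  have hsub : SubStructOf (replaceRel ℬ dR {fun _ => a}) ℬ :=
    replaceRel_subStructOf (Set.singleton_subset_iff.mpr haB)
  constructor
  · rintro v g ⟨h, hh, rfl⟩
    by_cases hv : v = v0
    · subst hv
      rw [updateView_self, Set.mem_singleton_iff]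
      funext x
      show h x = a
      rw [V.eq_of_mem_vars_base_const x.2]
      exact hh.apply_eq_of_replaceRel_singleton htX ⟨0, by rw [hdom.1]; exact one_pos⟩
    · rw [updateView_of_ne hv]
      exact hleg.1 v ⟨h, hh.mono hsub, rfl⟩
  · intro R t ht g hg
    by_cases hR : R = dR
    · subst hR
      obtain rfl : t = fun _ => X := by rwa [hdom.2, Set.mem_singleton_iff] at ht
      rw [updateView_self, Set.mem_singleton_iff] at hg
      subst hg
      rw [replaceRel_rel_self]
      rfl
    · rw [replaceRel_rel_of_ne hR]
      exact hleg.2 R t ht g (updateView_subset (Set.singleton_subset_iff.mpr ha) _ hg)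

theorem statement10_general
    (𝒜 : RelStruct σ ar A)
    (dR : σ) (X : A) (hdom : DomRestricted 𝒜 dR X)
    (htX : (fun _ => X : Fin (ar dR) → A) ∈ 𝒜.rel dR)
    (V : ViewStruct σ ar A 𝒜 ν)
    (ℬ : RelStruct σ ar B) (BV : ∀ v : ν, Set (↥(V.vars v) → B))
    (hleg : Legal 𝒜 ℬ V BV) (a : B)
    (ha : (fun _ => a) ∈ GAC V BV (V.base dR (fun _ => X) htX)) :
    Legal 𝒜 (replaceRel ℬ dR {fun _ => a}) V
      (updateView V (GAC V BV) (V.base dR (fun _ => X) htX) {fun _ => a}) :=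
  hleg.gac.replaceRel_updateView_base_dom hdom htX ha

/-- fixing a GAC-supported value `a` for a domain restricted
variable `X` (both in the right-hand structure and in the GAC views) yields a
structure that is legal w.r.t. `𝒜_V` and the modified instance `(𝒜,ℬ₁)`. -/
theorem statement10 [Finite σ] [Finite A] [Finite B] [Finite ν]
    (𝒜 : RelStruct σ ar A) (har : ∀ R : σ, 1 ≤ ar R)
    (dR : σ) (X : A) (hdom : DomRestricted 𝒜 dR X)
    (htX : (fun _ => X : Fin (ar dR) → A) ∈ 𝒜.rel dR)
    (V : ViewStruct σ ar A 𝒜 ν)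
    (ℬ : RelStruct σ ar B) (BV : ∀ v : ν, Set (↥(V.vars v) → B))
    (hleg : Legal 𝒜 ℬ V BV) (a : B)
    (ha : (fun _ => a) ∈ GAC V BV (V.base dR (fun _ => X) htX)) :
    Legal 𝒜 (replaceRel ℬ dR {fun _ => a}) V
      (updateView V (GAC V BV) (V.base dR (fun _ => X) htX) {fun _ => a}) :=
  statement10_general 𝒜 dR X hdom htX V ℬ BV hleg a ha
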